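/- arXiv:1409.6045 — 10 statements merged into one kernel-verified Lean document; each statement's English description precedes it below -/
import Mathlib

section
/- Let H be a real inner product space, m ∈ ℕ, v : Fin m → H a family of vectors with 0 < r ≤ ‖v i‖ ≤ R for all i, and K the Gram matrix with entries K i j = ⟪v i, v j⟫. If the dictionary is δ-distant, i.e., for all i ≠ j we have ‖v i‖² − ⟪v i, v j⟫² / ‖v j‖² ≥ δ² (with δ ≥ 0), then every eigenvalue λ of the symmetric matrix K satisfies r² − (m−1)·R·√(R² − δ²) ≤ λ ≤ R² + (m−1)·R·√(R² − δ²). -/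
open scoped RealInnerProductSpace BigOperators

/-!
Gershgorin's circle theorem puts every eigenvalue of `K` within `∑_{j ≠ k} |K k j|` of some
diagonal entry `K k k = ‖v k‖² ∈ [r², R²]`. Being δ-distant says that the component of `v k`
orthogonal to `v j` has squared length at least `δ²`, i.e. `⟪v k, v j⟫² ≤ ‖v j‖² (‖v k‖² - δ²)`,
so each of the `m - 1` off-diagonal entries of a row is at most `R √(R² - δ²)` in absolute value.
-/

theorem Matrix.hasEigenvalue_toLin'_of_mulVec_eq_smul {R n : Type*} [CommRing R] [Fintype n]
    [DecidableEq n] {A : Matrix n n R} {μ : R} {x : n → R} (hx : x ≠ 0) (hAx : A.mulVec x = μ • x) :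
    Module.End.HasEigenvalue (Matrix.toLin' A) μ :=
  Module.End.hasEigenvalue_of_hasEigenvector
    ⟨by rw [Module.End.mem_eigenspace_iff, Matrix.toLin'_apply, hAx], hx⟩

theorem Matrix.eigenvalue_mem_Icc_of_diag_mem_Icc_of_abs_le {n : Type*} [Fintype n]
    [DecidableEq n] {A : Matrix n n ℝ} {μ a b c : ℝ}
    (hμ : Module.End.HasEigenvalue (Matrix.toLin' A) μ) (hdiag : ∀ i, A i i ∈ Set.Icc a b)
    (hoff : ∀ i j, i ≠ j → |A i j| ≤ c) :
    μ ∈ Set.Icc (a - (Fintype.card n - 1) * c) (b + (Fintype.card n - 1) * c) := by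
  obtain ⟨k, hk⟩ := eigenvalue_mem_ball hμ
  rw [Metric.mem_closedBall, Real.dist_eq, abs_le] at hk
  have hrow : ∑ j ∈ Finset.univ.erase k, ‖A k j‖ ≤ (Fintype.card n - 1) * c := by
    rw [← Finset.card_univ, ← Finset.cast_card_erase_of_mem (Finset.mem_univ k), ← nsmul_eq_mul]
    exact Finset.sum_le_card_nsmul _ _ _ fun j hj => hoff k j (Finset.ne_of_mem_erase hj).symm
  constructor <;> linarith [hdiag k |>.1, hdiag k |>.2]

theorem abs_real_inner_le_norm_mul_sqrt_of_sq_le {H : Type*} [NormedAddCommGroup H]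
    [InnerProductSpace ℝ H] {x y : H} {δ : ℝ} (hy : y ≠ 0)
    (h : δ ^ 2 ≤ ‖x‖ ^ 2 - ⟪x, y⟫ ^ 2 / ‖y‖ ^ 2) :
    |⟪x, y⟫| ≤ ‖y‖ * √(‖x‖ ^ 2 - δ ^ 2) := by
  have hsq : ⟪x, y⟫ ^ 2 ≤ ‖y‖ ^ 2 * (‖x‖ ^ 2 - δ ^ 2) := by
    rw [mul_comm, ← div_le_iff₀ (by positivity)]
    linarith
  rw [← Real.sqrt_sq_eq_abs, ← Real.sqrt_sq (norm_nonneg y), ← Real.sqrt_mul (by positivity)]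
  exact Real.sqrt_le_sqrt hsq

theorem gram_eigenvalue_bounds_distant_general
    {H : Type*} [NormedAddCommGroup H] [InnerProductSpace ℝ H]
    {m : ℕ} (v : Fin m → H) (r R δ : ℝ)
    (hr : 0 < r)
    (hlow : ∀ i, r ≤ ‖v i‖) (hup : ∀ i, ‖v i‖ ≤ R)
    (hdist : ∀ i j, i ≠ j → δ ^ 2 ≤ ‖v i‖ ^ 2 - ⟪v i, v j⟫ ^ 2 / ‖v j‖ ^ 2)
    (K : Matrix (Fin m) (Fin m) ℝ) (hK : ∀ i j, K i j = ⟪v i, v j⟫)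
    (lam : ℝ) (hlam : ∃ x : Fin m → ℝ, x ≠ 0 ∧ K.mulVec x = lam • x) :
    r ^ 2 - ((m : ℝ) - 1) * R * Real.sqrt (R ^ 2 - δ ^ 2) ≤ lam ∧
      lam ≤ R ^ 2 + ((m : ℝ) - 1) * R * Real.sqrt (R ^ 2 - δ ^ 2) := by
  obtain ⟨x, hx, hKx⟩ := hlam
  have hdiag : ∀ i, K i i ∈ Set.Icc (r ^ 2) (R ^ 2) := fun i => by
    rw [hK, real_inner_self_eq_norm_sq]
    exact ⟨pow_le_pow_left₀ hr.le (hlow i) 2, pow_le_pow_left₀ (norm_nonneg _) (hup i) 2⟩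
  have hoff : ∀ i j, i ≠ j → |K i j| ≤ R * √(R ^ 2 - δ ^ 2) := fun i j hij => by
    have hvj : v j ≠ 0 := norm_pos_iff.mp (hr.trans_le (hlow j))
    rw [hK]
    refine (abs_real_inner_le_norm_mul_sqrt_of_sq_le hvj (hdist i j hij)).trans ?_
    gcongr
    · exact (norm_nonneg _).trans (hup j)
    · exact hup j
    · exact hup i
  have := Matrix.eigenvalue_mem_Icc_of_diag_mem_Icc_of_abs_le
    (Matrix.hasEigenvalue_toLin'_of_mulVec_eq_smul hx hKx) hdiag hoff
  simpa only [Set.mem_Icc, Fintype.card_fin, mul_assoc] using this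

/-- Eigenvalue bounds for the Gram matrix of a δ-distant dictionary. -/
theorem gram_eigenvalue_bounds_distant
    {H : Type*} [NormedAddCommGroup H] [InnerProductSpace ℝ H]
    {m : ℕ} (v : Fin m → H) (r R δ : ℝ)
    (hr : 0 < r) (hδ : 0 ≤ δ)
    (hlow : ∀ i, r ≤ ‖v i‖) (hup : ∀ i, ‖v i‖ ≤ R)
    (hdist : ∀ i j, i ≠ j → δ ^ 2 ≤ ‖v i‖ ^ 2 - ⟪v i, v j⟫ ^ 2 / ‖v j‖ ^ 2)
    (K : Matrix (Fin m) (Fin m) ℝ) (hK : ∀ i j, K i j = ⟪v i, v j⟫)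
    (lam : ℝ) (hlam : ∃ x : Fin m → ℝ, x ≠ 0 ∧ K.mulVec x = lam • x) :
    r ^ 2 - ((m : ℝ) - 1) * R * Real.sqrt (R ^ 2 - δ ^ 2) ≤ lam ∧
      lam ≤ R ^ 2 + ((m : ℝ) - 1) * R * Real.sqrt (R ^ 2 - δ ^ 2) :=
  gram_eigenvalue_bounds_distant_general v r R δ hr hlow hup hdist K hK lam hlam
end

section
/- Let H be a real inner product space, m ∈ ℕ, and v : Fin m → H a family of vectors with 0 < r ≤ ‖v i‖ ≤ R for all i. If the dictionary is δ-distant, i.e., for all i ≠ j we have ‖v i‖² − ⟪v i, v j⟫² / ‖v j‖² ≥ δ² (with δ ≥ 0), and if (m−1)·R·√(R² − δ²) < r², then the family (v i) is linearly independent. -/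
/-!
The Gram matrix of `v` has diagonal entries at least `r²`, while the distance condition bounds
each off-diagonal entry by `R * √(R² - δ²)`. The hypothesis on `m` therefore makes the Gram
matrix strictly diagonally dominant, hence nonsingular by Gershgorin's theorem, and a family with
nonsingular Gram matrix is linearly independent.
-/

open scoped RealInnerProductSpace

theorem linearIndependent_of_sum_norm_inner_lt_norm_sq
    {𝕜 E ι : Type*} [RCLike 𝕜] [NormedAddCommGroup E] [InnerProductSpace 𝕜 E]
    [Fintype ι] [DecidableEq ι] {v : ι → E}
    (h : ∀ i, ∑ j ∈ Finset.univ.erase i, ‖inner 𝕜 (v i) (v j)‖ < ‖v i‖ ^ 2) :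
    LinearIndependent 𝕜 v := by
  refine Matrix.linearIndependent_of_det_gram_ne_zero (det_ne_zero_of_sum_row_lt_diag ?_)
  intro i
  simpa only [Matrix.gram_apply, inner_self_eq_norm_sq_to_K, norm_pow, RCLike.norm_ofReal,
    abs_norm] using h i

section Distant

variable {H : Type*} [NormedAddCommGroup H] [InnerProductSpace ℝ H] {x y : H} {δ : ℝ}

theorem real_inner_sq_le_of_distant (h : δ ^ 2 ≤ ‖x‖ ^ 2 - ⟪x, y⟫ ^ 2 / ‖y‖ ^ 2) :
    ⟪x, y⟫ ^ 2 ≤ (‖x‖ ^ 2 - δ ^ 2) * ‖y‖ ^ 2 := by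
  rcases eq_or_ne y 0 with rfl | hy
  · simp
  · rw [← div_le_iff₀ (by positivity)]
    linarith

theorem abs_real_inner_le_of_distant (h : δ ^ 2 ≤ ‖x‖ ^ 2 - ⟪x, y⟫ ^ 2 / ‖y‖ ^ 2) :
    |⟪x, y⟫| ≤ ‖y‖ * √(‖x‖ ^ 2 - δ ^ 2) := by
  have hx : 0 ≤ ‖x‖ ^ 2 - δ ^ 2 := by
    have : 0 ≤ ⟪x, y⟫ ^ 2 / ‖y‖ ^ 2 := by positivity
    linarith
  calc |⟪x, y⟫| ≤ √((‖x‖ ^ 2 - δ ^ 2) * ‖y‖ ^ 2) :=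
        Real.abs_le_sqrt (real_inner_sq_le_of_distant h)
    _ = ‖y‖ * √(‖x‖ ^ 2 - δ ^ 2) := by
        rw [Real.sqrt_mul hx, Real.sqrt_sq (norm_nonneg y), mul_comm]

end Distant

theorem linearIndependent_of_distant_general
    {H : Type*} [NormedAddCommGroup H] [InnerProductSpace ℝ H]
    {m : ℕ} (v : Fin m → H) (r R δ : ℝ)
    (hr : 0 < r)
    (hlow : ∀ i, r ≤ ‖v i‖) (hup : ∀ i, ‖v i‖ ≤ R)
    (hdist : ∀ i j, i ≠ j → δ ^ 2 ≤ ‖v i‖ ^ 2 - ⟪v i, v j⟫ ^ 2 / ‖v j‖ ^ 2)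
    (hcond : ((m : ℝ) - 1) * R * Real.sqrt (R ^ 2 - δ ^ 2) < r ^ 2) :
    LinearIndependent ℝ v := by
  refine linearIndependent_of_sum_norm_inner_lt_norm_sq fun i => ?_
  have hoff : ∀ j ∈ Finset.univ.erase i, ‖⟪v i, v j⟫‖ ≤ R * √(R ^ 2 - δ ^ 2) := by
    intro j hj
    rw [Real.norm_eq_abs]
    refine (abs_real_inner_le_of_distant (hdist i j (Finset.ne_of_mem_erase hj).symm)).trans ?_
    gcongr
    · exact (norm_nonneg _).trans (hup i)
    · exact hup j
    · exact hup i
  have hcard : ((Finset.univ.erase i).card : ℝ) = (m : ℝ) - 1 := by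
    rw [Finset.card_erase_of_mem (Finset.mem_univ i), Finset.card_univ, Fintype.card_fin,
      Nat.cast_pred i.pos]
  calc ∑ j ∈ Finset.univ.erase i, ‖⟪v i, v j⟫‖
      ≤ ((m : ℝ) - 1) * (R * √(R ^ 2 - δ ^ 2)) := by
        simpa only [Finset.sum_const, nsmul_eq_mul, hcard] using Finset.sum_le_sum hoff
    _ < r ^ 2 := by rwa [← mul_assoc]
    _ ≤ ‖v i‖ ^ 2 := by gcongr; exact hlow i

/-- Linear independence of a δ-distant dictionary. -/
theorem linearIndependent_of_distant
    {H : Type*} [NormedAddCommGroup H] [InnerProductSpace ℝ H]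
    {m : ℕ} (v : Fin m → H) (r R δ : ℝ)
    (hr : 0 < r) (hδ : 0 ≤ δ)
    (hlow : ∀ i, r ≤ ‖v i‖) (hup : ∀ i, ‖v i‖ ≤ R)
    (hdist : ∀ i j, i ≠ j → δ ^ 2 ≤ ‖v i‖ ^ 2 - ⟪v i, v j⟫ ^ 2 / ‖v j‖ ^ 2)
    (hcond : ((m : ℝ) - 1) * R * Real.sqrt (R ^ 2 - δ ^ 2) < r ^ 2) :
    LinearIndependent ℝ v :=
  linearIndependent_of_distant_general v r R δ hr hlow hup hdist hcond
end

section
/- Let H be a real inner product space, m ∈ ℕ, and v : Fin m → H a family of vectors with 0 < r ≤ ‖v i‖ ≤ R for all i. If the dictionary is γ-coherent, i.e., for all i ≠ j we have |⟪v i, v j⟫| ≤ γ · ‖v i‖ · ‖v j‖ (with γ ≥ 0), and if (m−1)·γ·R² < r², then the family (v i) is linearly independent. -/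
open scoped RealInnerProductSpace BigOperators

open Finset

/-- Gershgorin's theorem applied to the Gram matrix. -/
theorem linearIndependent_of_sum_norm_inner_lt {𝕜 E ι : Type*} [RCLike 𝕜]
    [SeminormedAddCommGroup E] [InnerProductSpace 𝕜 E] [Fintype ι] [DecidableEq ι] {v : ι → E}
    (h : ∀ i, ∑ j ∈ univ.erase i, ‖inner 𝕜 (v i) (v j)‖ < ‖v i‖ ^ 2) :
    LinearIndependent 𝕜 v :=
  Matrix.linearIndependent_of_det_gram_ne_zero <| det_ne_zero_of_sum_row_lt_diag
    fun i => by simpa [inner_self_eq_norm_sq_to_K] using h i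

theorem sum_abs_inner_erase_le_of_coherent {H ι : Type*} [SeminormedAddCommGroup H]
    [InnerProductSpace ℝ H] [Fintype ι] [DecidableEq ι] {v : ι → H} {R γ : ℝ} (hγ : 0 ≤ γ)
    (hup : ∀ i, ‖v i‖ ≤ R) (hcoh : ∀ i j, i ≠ j → |⟪v i, v j⟫| ≤ γ * ‖v i‖ * ‖v j‖) (i : ι) :
    ∑ j ∈ univ.erase i, |⟪v i, v j⟫| ≤ ((Fintype.card ι : ℝ) - 1) * (γ * R ^ 2) := by
  have hterm : ∀ j ∈ univ.erase i, |⟪v i, v j⟫| ≤ γ * R ^ 2 := fun j hj =>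
    calc |⟪v i, v j⟫| ≤ γ * ‖v i‖ * ‖v j‖ := hcoh i j (ne_of_mem_erase hj).symm
      _ = γ * (‖v i‖ * ‖v j‖) := mul_assoc ..
      _ ≤ γ * R ^ 2 := by
        rw [sq]
        gcongr
        exacts [(norm_nonneg _).trans (hup i), hup i, hup j]
  have hcard : ((univ.erase i).card : ℝ) = (Fintype.card ι : ℝ) - 1 := by
    rw [card_erase_of_mem (mem_univ i), card_univ, Nat.cast_pred (Fintype.card_pos_iff.2 ⟨i⟩)]
  simpa only [nsmul_eq_mul, hcard] using sum_le_card_nsmul _ _ _ hterm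

/-- Linear independence of a γ-coherent dictionary. -/
theorem linearIndependent_of_coherent
    {H : Type*} [NormedAddCommGroup H] [InnerProductSpace ℝ H]
    {m : ℕ} (v : Fin m → H) (r R γ : ℝ)
    (hr : 0 < r) (hγ : 0 ≤ γ)
    (hlow : ∀ i, r ≤ ‖v i‖) (hup : ∀ i, ‖v i‖ ≤ R)
    (hcoh : ∀ i j, i ≠ j → |⟪v i, v j⟫| ≤ γ * ‖v i‖ * ‖v j‖)
    (hcond : ((m : ℝ) - 1) * γ * R ^ 2 < r ^ 2) :
    LinearIndependent ℝ v := by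
  refine linearIndependent_of_sum_norm_inner_lt fun i => ?_
  calc ∑ j ∈ univ.erase i, ‖⟪v i, v j⟫‖ = ∑ j ∈ univ.erase i, |⟪v i, v j⟫| := rfl
    _ ≤ ((m : ℝ) - 1) * (γ * R ^ 2) := by
      simpa only [Fintype.card_fin] using sum_abs_inner_erase_le_of_coherent hγ hup hcoh i
    _ < r ^ 2 := by rwa [← mul_assoc]
    _ ≤ ‖v i‖ ^ 2 := pow_le_pow_left₀ hr.le (hlow i) 2
end

section
/- Let H be a real inner product space, m ∈ ℕ, v : Fin m → H a family of vectors with 0 < r ≤ ‖v i‖ ≤ R for all i, and K the Gram matrix with entries K i j = ⟪v i, v j⟫. Suppose the dictionary is δ-distant, i.e., for all i ≠ j, ‖v i‖² − ⟪v i, v j⟫² / ‖v j‖² ≥ δ² (with δ ≥ 0), and suppose (m−1)·R·√(R² − δ²) < r². Then for any two eigenvalues λ and μ of the symmetric matrix K, one has λ ≤ ((R² + (m−1)·R·√(R² − δ²)) / (r² − (m−1)·R·√(R² − δ²))) · μ; in particular the ℓ₂ condition number λ_max/λ_min of K is at most (R² + (m−1)·R·√(R² − δ²)) / (r² − (m−1)·R·√(R²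 − δ²)). -/
/-!
Every off-diagonal entry of the Gram matrix is small: δ-distance bounds the squared length
`⟪v i, v j⟫² / ‖v j‖²` of the projection of `v i` on `v j` by `R² − δ²`, so
`|⟪v i, v j⟫| ≤ R √(R² − δ²)`, while the diagonal entries `‖v i‖²` lie in `[r², R²]`.
Gershgorin's circle theorem then confines every eigenvalue of `K` to
`[r² − S, R² + S]` with `S = (m − 1) R √(R² − δ²)`, and `λ ≤ R² + S = C (r² − S) ≤ C μ`.
-/

open scoped RealInnerProductSpace BigOperators

theorem abs_real_inner_le_of_sq_sub_proj_ge {H : Type*} [NormedAddCommGroup H]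
    [InnerProductSpace ℝ H] {u w : H} {R δ : ℝ} (hu : ‖u‖ ≤ R) (hw : ‖w‖ ≤ R)
    (hd : δ ^ 2 ≤ ‖u‖ ^ 2 - ⟪u, w⟫ ^ 2 / ‖w‖ ^ 2) :
    |⟪u, w⟫| ≤ R * Real.sqrt (R ^ 2 - δ ^ 2) := by
  rcases eq_or_ne w 0 with rfl | hw0
  · simpa using mul_nonneg ((norm_nonneg u).trans hu) (Real.sqrt_nonneg _)
  have hproj : ⟪u, w⟫ ^ 2 / ‖w‖ ^ 2 ≤ R ^ 2 - δ ^ 2 := by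
    nlinarith [norm_nonneg u]
  have hsq : ⟪u, w⟫ ^ 2 ≤ (R ^ 2 - δ ^ 2) * ‖w‖ ^ 2 :=
    (div_le_iff₀ (by positivity)).mp hproj
  calc |⟪u, w⟫| = Real.sqrt (⟪u, w⟫ ^ 2) := (Real.sqrt_sq_eq_abs _).symm
    _ ≤ Real.sqrt ((R ^ 2 - δ ^ 2) * ‖w‖ ^ 2) := Real.sqrt_le_sqrt hsq
    _ = ‖w‖ * Real.sqrt (R ^ 2 - δ ^ 2) := by
      rw [Real.sqrt_mul' _ (sq_nonneg _), Real.sqrt_sq (norm_nonneg w), mul_comm]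
    _ ≤ R * Real.sqrt (R ^ 2 - δ ^ 2) := by gcongr

theorem Matrix.mem_Icc_of_mulVec_eq_smul_of_abs_le {n : Type*} [Fintype n] [DecidableEq n]
    {A : Matrix n n ℝ} {a b c t : ℝ} (hdiag : ∀ i, A i i ∈ Set.Icc a b)
    (hoff : ∀ i j, i ≠ j → |A i j| ≤ c) {z : n → ℝ} (hz : z ≠ 0) (hAz : A.mulVec z = t • z) :
    t ∈ Set.Icc (a - ((Fintype.card n : ℝ) - 1) * c) (b + ((Fintype.card n : ℝ) - 1) * c) := by
  have hev : Module.End.HasEigenvalue (Matrix.toLin' A) t :=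
    Module.End.hasEigenvalue_of_hasEigenvector
      ⟨by rw [Module.End.mem_eigenspace_iff, Matrix.toLin'_apply, hAz], hz⟩
  obtain ⟨k, hk⟩ := eigenvalue_mem_ball hev
  rw [Metric.mem_closedBall, Real.dist_eq] at hk
  have hrow : ∑ j ∈ Finset.univ.erase k, ‖A k j‖ ≤ ((Fintype.card n : ℝ) - 1) * c := by
    calc ∑ j ∈ Finset.univ.erase k, ‖A k j‖ ≤ ∑ _j ∈ Finset.univ.erase k, c :=
          Finset.sum_le_sum fun j hj => hoff k j (Finset.ne_of_mem_erase hj).symm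
      _ = ((Fintype.card n : ℝ) - 1) * c := by
          rw [Finset.sum_const, Finset.card_erase_of_mem (Finset.mem_univ k), Finset.card_univ,
            nsmul_eq_mul, Nat.cast_pred (Fintype.card_pos_iff.mpr ⟨k⟩)]
  obtain ⟨hlo, hhi⟩ := abs_le.mp (hk.trans hrow)
  obtain ⟨ha, hb⟩ := hdiag k
  constructor <;> linarith

theorem gram_condition_number_distant_general
    {H : Type*} [NormedAddCommGroup H] [InnerProductSpace ℝ H]
    {m : ℕ} (v : Fin m → H) (r R δ : ℝ)
    (hr : 0 < r)
    (hlow : ∀ i, r ≤ ‖v i‖) (hup : ∀ i, ‖v i‖ ≤ R)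
    (hdist : ∀ i j, i ≠ j → δ ^ 2 ≤ ‖v i‖ ^ 2 - ⟪v i, v j⟫ ^ 2 / ‖v j‖ ^ 2)
    (hcond : ((m : ℝ) - 1) * R * Real.sqrt (R ^ 2 - δ ^ 2) < r ^ 2)
    (K : Matrix (Fin m) (Fin m) ℝ) (hK : ∀ i j, K i j = ⟪v i, v j⟫)
    (lam mu : ℝ)
    (hlam : ∃ x : Fin m → ℝ, x ≠ 0 ∧ K.mulVec x = lam • x)
    (hmu : ∃ x : Fin m → ℝ, x ≠ 0 ∧ K.mulVec x = mu • x) :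
    lam ≤ (R ^ 2 + ((m : ℝ) - 1) * R * Real.sqrt (R ^ 2 - δ ^ 2)) /
          (r ^ 2 - ((m : ℝ) - 1) * R * Real.sqrt (R ^ 2 - δ ^ 2)) * mu := by
  set S := ((m : ℝ) - 1) * R * Real.sqrt (R ^ 2 - δ ^ 2)
  have hdiag : ∀ i, K i i ∈ Set.Icc (r ^ 2) (R ^ 2) := fun i => by
    rw [hK, real_inner_self_eq_norm_sq]
    exact ⟨pow_le_pow_left₀ hr.le (hlow i) 2, pow_le_pow_left₀ (norm_nonneg _) (hup i) 2⟩
  have hoff : ∀ i j, i ≠ j → |K i j| ≤ R * Real.sqrt (R ^ 2 - δ ^ 2) := fun i j hij => by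
    rw [hK]
    exact abs_real_inner_le_of_sq_sub_proj_ge (hup i) (hup j) (hdist i j hij)
  have hspec : ∀ t, (∃ x : Fin m → ℝ, x ≠ 0 ∧ K.mulVec x = t • x) →
      t ∈ Set.Icc (r ^ 2 - S) (R ^ 2 + S) := by
    rintro t ⟨x, hx, hKx⟩
    simpa [S, mul_assoc] using Matrix.mem_Icc_of_mulVec_eq_smul_of_abs_le hdiag hoff hx hKx
  obtain ⟨hlam_lo, hlam_hi⟩ := hspec lam hlam
  obtain ⟨hmu_lo, -⟩ := hspec mu hmu
  have hgap : 0 < r ^ 2 - S := by linarith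
  calc lam ≤ R ^ 2 + S := hlam_hi
    _ = (R ^ 2 + S) / (r ^ 2 - S) * (r ^ 2 - S) := by field_simp
    _ ≤ (R ^ 2 + S) / (r ^ 2 - S) * mu :=
      mul_le_mul_of_nonneg_left hmu_lo (div_nonneg (by linarith) hgap.le)

/-- Condition-number bound for the Gram matrix of a δ-distant dictionary:
any two eigenvalues λ, μ satisfy λ ≤ C · μ with
C = (R² + (m−1)·R·√(R² − δ²)) / (r² − (m−1)·R·√(R² − δ²)). -/
theorem gram_condition_number_distant
    {H : Type*} [NormedAddCommGroup H] [InnerProductSpace ℝ H]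
    {m : ℕ} (v : Fin m → H) (r R δ : ℝ)
    (hr : 0 < r) (hδ : 0 ≤ δ)
    (hlow : ∀ i, r ≤ ‖v i‖) (hup : ∀ i, ‖v i‖ ≤ R)
    (hdist : ∀ i j, i ≠ j → δ ^ 2 ≤ ‖v i‖ ^ 2 - ⟪v i, v j⟫ ^ 2 / ‖v j‖ ^ 2)
    (hcond : ((m : ℝ) - 1) * R * Real.sqrt (R ^ 2 - δ ^ 2) < r ^ 2)
    (K : Matrix (Fin m) (Fin m) ℝ) (hK : ∀ i j, K i j = ⟪v i, v j⟫)
    (lam mu : ℝ)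
    (hlam : ∃ x : Fin m → ℝ, x ≠ 0 ∧ K.mulVec x = lam • x)
    (hmu : ∃ x : Fin m → ℝ, x ≠ 0 ∧ K.mulVec x = mu • x) :
    lam ≤ (R ^ 2 + ((m : ℝ) - 1) * R * Real.sqrt (R ^ 2 - δ ^ 2)) /
          (r ^ 2 - ((m : ℝ) - 1) * R * Real.sqrt (R ^ 2 - δ ^ 2)) * mu :=
  gram_condition_number_distant_general v r R δ hr hlow hup hdist hcond K hK lam mu hlam hmu
end

section
/- Let H be a real inner product space, m ∈ ℕ, v : Fin m → H a family of vectors with 0 < r ≤ ‖v i‖ ≤ R for all i, and K the Gram matrix with entries K i j = ⟪v i, v j⟫. Suppose the dictionary is γ-coherent, i.e., for all i ≠ j, |⟪v i, v j⟫| ≤ γ · ‖v i‖ · ‖v j‖ (with γ ≥ 0), and suppose (m−1)·γ·R² < r². Then for any two eigenvalues λ and μ of the symmetric matrix K, one has λ ≤ ((R² + (m−1)·γ·R²) / (r² − (m−1)·γ·R²)) · μ; in particular the ℓ₂ condition number λ_max/λ_min of K is at most (R² + (m−1)·γ·R²) / (r² − (m−1)·γ·R²). -/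
/-!
By Gershgorin's circle theorem every eigenvalue of the Gram matrix lies within the off-diagonal
row sum `∑_{j ≠ k} |⟪v k, v j⟫| ≤ (m - 1) γ R²` of some diagonal entry `‖v k‖² ∈ [r², R²]`.
Hence all eigenvalues lie in `[r² - (m - 1) γ R², R² + (m - 1) γ R²]`, and when the left end is
positive the ratio of any two of them is at most the ratio of the two ends.
-/

open scoped RealInnerProductSpace
open Finset

namespace Matrix

variable {n : Type*} [Fintype n] [DecidableEq n]

theorem hasEigenvalue_toLin'_of_mulVec_eq_smul_s10 {R : Type*} [CommRing R] {A : Matrix n n R}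
    {μ : R} {x : n → R} (hx : x ≠ 0) (h : A *ᵥ x = μ • x) :
    Module.End.HasEigenvalue (toLin' A) μ :=
  Module.End.hasEigenvalue_of_hasEigenvector
    ⟨Module.End.mem_eigenspace_iff.mpr (by rwa [toLin'_apply]), hx⟩

theorem eigenvalue_mem_Icc_of_diag_mem_Icc {A : Matrix n n ℝ} {a b c μ : ℝ}
    (hdiag : ∀ k, A k k ∈ Set.Icc a b) (hrow : ∀ k, ∑ j ∈ univ.erase k, |A k j| ≤ c)
    (hμ : Module.End.HasEigenvalue (toLin' A) μ) : μ ∈ Set.Icc (a - c) (b + c) := by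
  obtain ⟨k, hk⟩ := eigenvalue_mem_ball hμ
  rw [Metric.mem_closedBall, Real.dist_eq] at hk
  simp only [Real.norm_eq_abs] at hk
  obtain ⟨hka, hkb⟩ := hdiag k
  obtain ⟨hlo, hhi⟩ := abs_le.mp (hk.trans (hrow k))
  constructor <;> linarith

end Matrix

section Gram

variable {H : Type*} [NormedAddCommGroup H] [InnerProductSpace ℝ H]
  {ι : Type*} [Fintype ι] [DecidableEq ι]

theorem sum_erase_abs_inner_le_of_coherent (v : ι → H) {γ R : ℝ} (hγ : 0 ≤ γ)
    (hup : ∀ i, ‖v i‖ ≤ R) (hcoh : ∀ i j, i ≠ j → |⟪v i, v j⟫| ≤ γ * ‖v i‖ * ‖v j‖) (k : ι) :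
    ∑ j ∈ univ.erase k, |⟪v k, v j⟫| ≤ ((Fintype.card ι : ℝ) - 1) * γ * R ^ 2 := by
  have hterm : ∀ j ∈ univ.erase k, |⟪v k, v j⟫| ≤ γ * R ^ 2 := fun j hj => by
    have hnorm : ‖v k‖ * ‖v j‖ ≤ R ^ 2 := by
      rw [sq]; exact mul_le_mul (hup k) (hup j) (norm_nonneg _) ((norm_nonneg _).trans (hup k))
    calc |⟪v k, v j⟫| ≤ γ * ‖v k‖ * ‖v j‖ := hcoh k j (ne_of_mem_erase hj).symm
      _ = γ * (‖v k‖ * ‖v j‖) := mul_assoc _ _ _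
      _ ≤ γ * R ^ 2 := mul_le_mul_of_nonneg_left hnorm hγ
  calc ∑ j ∈ univ.erase k, |⟪v k, v j⟫| ≤ ∑ _j ∈ univ.erase k, γ * R ^ 2 := sum_le_sum hterm
    _ = ((Fintype.card ι : ℝ) - 1) * γ * R ^ 2 := by
      rw [sum_const, card_erase_of_mem (mem_univ k), card_univ, nsmul_eq_mul,
        Nat.cast_sub (Fintype.card_pos_iff.mpr ⟨k⟩), Nat.cast_one, mul_assoc]

theorem gram_eigenvalue_mem_Icc_of_coherent (v : ι → H) {r R γ μ : ℝ} (hr : 0 ≤ r)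
    (hγ : 0 ≤ γ) (hlow : ∀ i, r ≤ ‖v i‖) (hup : ∀ i, ‖v i‖ ≤ R)
    (hcoh : ∀ i j, i ≠ j → |⟪v i, v j⟫| ≤ γ * ‖v i‖ * ‖v j‖)
    (hμ : Module.End.HasEigenvalue (Matrix.toLin' (Matrix.gram ℝ v)) μ) :
    μ ∈ Set.Icc (r ^ 2 - ((Fintype.card ι : ℝ) - 1) * γ * R ^ 2)
      (R ^ 2 + ((Fintype.card ι : ℝ) - 1) * γ * R ^ 2) := by
  refine Matrix.eigenvalue_mem_Icc_of_diag_mem_Icc (fun k => ?_)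
    (sum_erase_abs_inner_le_of_coherent v hγ hup hcoh) hμ
  rw [real_inner_self_eq_norm_sq]
  exact ⟨pow_le_pow_left₀ hr (hlow k) 2, pow_le_pow_left₀ (norm_nonneg _) (hup k) 2⟩

end Gram

/-- Condition-number bound for the Gram matrix of a γ-coherent dictionary:
any two eigenvalues λ, μ satisfy
λ ≤ ((R² + (m−1)·γ·R²) / (r² − (m−1)·γ·R²)) · μ. -/
theorem gram_condition_number_coherent
    {H : Type*} [NormedAddCommGroup H] [InnerProductSpace ℝ H]
    {m : ℕ} (v : Fin m → H) (r R γ : ℝ)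
    (hr : 0 < r) (hγ : 0 ≤ γ)
    (hlow : ∀ i, r ≤ ‖v i‖) (hup : ∀ i, ‖v i‖ ≤ R)
    (hcoh : ∀ i j, i ≠ j → |⟪v i, v j⟫| ≤ γ * ‖v i‖ * ‖v j‖)
    (hcond : ((m : ℝ) - 1) * γ * R ^ 2 < r ^ 2)
    (K : Matrix (Fin m) (Fin m) ℝ) (hK : ∀ i j, K i j = ⟪v i, v j⟫)
    (lam mu : ℝ)
    (hlam : ∃ x : Fin m → ℝ, x ≠ 0 ∧ K.mulVec x = lam • x)
    (hmu : ∃ x : Fin m → ℝ, x ≠ 0 ∧ K.mulVec x = mu • x) :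
    lam ≤ (R ^ 2 + ((m : ℝ) - 1) * γ * R ^ 2) /
          (r ^ 2 - ((m : ℝ) - 1) * γ * R ^ 2) * mu := by
  have hKgram : K = Matrix.gram ℝ v := Matrix.ext fun i j => hK i j
  set c := ((m : ℝ) - 1) * γ * R ^ 2
  have hspec : ∀ ν : ℝ, (∃ x : Fin m → ℝ, x ≠ 0 ∧ K.mulVec x = ν • x) →
      ν ∈ Set.Icc (r ^ 2 - c) (R ^ 2 + c) := fun ν ⟨x, hx, hxν⟩ => by
    have h := gram_eigenvalue_mem_Icc_of_coherent v hr.le hγ hlow hup hcoh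
      (hKgram ▸ Matrix.hasEigenvalue_toLin'_of_mulVec_eq_smul_s10 hx hxν)
    rwa [Fintype.card_fin] at h
  obtain ⟨-, hlam_le⟩ := hspec lam hlam
  obtain ⟨hmu_ge, hmu_le⟩ := hspec mu hmu
  have hgap : 0 < r ^ 2 - c := sub_pos.mpr hcond
  calc lam ≤ R ^ 2 + c := hlam_le
    _ = (R ^ 2 + c) / (r ^ 2 - c) * (r ^ 2 - c) := (div_mul_cancel₀ _ hgap.ne').symm
    _ ≤ (R ^ 2 + c) / (r ^ 2 - c) * mu :=
      mul_le_mul_of_nonneg_left hmu_ge (div_nonneg (by linarith) hgap.le)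
end

section
/- Let H be a real inner product space, m ∈ ℕ, and v : Fin m → H a family of vectors with 0 < r ≤ ‖v i‖ ≤ R for all i. Suppose the dictionary is δ-distant, i.e., for all i ≠ j, ‖v i‖² − ⟪v i, v j⟫² / ‖v j‖² ≥ δ² (with δ ≥ 0). Then for every coefficient vector α : Fin m → ℝ, (r² − (m−1)·R·√(R² − δ²)) · ‖α‖² ≤ ‖∑_j α j • v j‖² ≤ (R² + (m−1)·R·√(R² − δ²)) · ‖α‖², where ‖α‖² = ∑_j (α j)². (Quasi-isometry between the dual space ℝ^m and the span of the dictionary, for the distance measure.) -/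
/-!
Expanding `‖∑ α j • v j‖²` gives the diagonal `∑ α j² ‖v j‖²`, which lies between `r² ‖α‖²` and
`R² ‖α‖²`, plus the off-diagonal Gram terms. The distance condition says that the component of
`v i` orthogonal to `v j` has norm at least `δ`, so the projection of `v i` on `v j` has norm at
most `√(R² - δ²)`, i.e. `|⟪v i, v j⟫| ≤ R √(R² - δ²)`. With `|α i α j| ≤ (α i² + α j²) / 2`, the
off-diagonal part is then at most `(m - 1) R √(R² - δ²) ‖α‖²` in absolute value.
-/

open scoped RealInnerProductSpace BigOperators

open Finset

theorem sum_sum_erase_add {ι : Type*} [Fintype ι] [DecidableEq ι] (f : ι → ℝ) :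
    ∑ i, ∑ j ∈ univ.erase i, (f i + f j) = 2 * ((Fintype.card ι - 1) * ∑ i, f i) := by
  simp only [sum_add_distrib, sum_erase_eq_sub (mem_univ _), sum_const, card_univ, nsmul_eq_mul,
    sum_sub_distrib, ← mul_sum]
  ring

theorem abs_mul_mul_le_of_abs_le {a b c C : ℝ} (hc : |c| ≤ C) :
    |a * b * c| ≤ C * a ^ 2 / 2 + C * b ^ 2 / 2 := by
  have hC : 0 ≤ C := (abs_nonneg c).trans hc
  calc |a * b * c| = |a * b| * |c| := abs_mul _ _
    _ ≤ (a ^ 2 + b ^ 2) / 2 * C := by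
      gcongr
      have h := two_mul_le_add_sq |a| |b|
      rw [sq_abs, sq_abs] at h
      rw [abs_mul]
      linarith
    _ = C * a ^ 2 / 2 + C * b ^ 2 / 2 := by ring

theorem abs_sum_sum_erase_mul_mul_le {ι : Type*} [Fintype ι] [DecidableEq ι] (α : ι → ℝ)
    (a : ι → ι → ℝ) {C : ℝ} (ha : ∀ i j, i ≠ j → |a i j| ≤ C) :
    |∑ i, ∑ j ∈ univ.erase i, α i * α j * a i j| ≤
      C * ((Fintype.card ι - 1) * ∑ i, α i ^ 2) := by
  calc |∑ i, ∑ j ∈ univ.erase i, α i * α j * a i j|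
      ≤ ∑ i, ∑ j ∈ univ.erase i, |α i * α j * a i j| :=
        (abs_sum_le_sum_abs _ _).trans (sum_le_sum fun i _ => abs_sum_le_sum_abs _ _)
    _ ≤ ∑ i, ∑ j ∈ univ.erase i, (C * α i ^ 2 / 2 + C * α j ^ 2 / 2) :=
        sum_le_sum fun i _ => sum_le_sum fun j hj =>
          abs_mul_mul_le_of_abs_le (ha i j (ne_of_mem_erase hj).symm)
    _ = C * ((Fintype.card ι - 1) * ∑ i, α i ^ 2) := by
        rw [sum_sum_erase_add fun i => C * α i ^ 2 / 2, ← sum_div, ← mul_sum]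
        ring

theorem norm_sum_smul_sq {H ι : Type*} [NormedAddCommGroup H] [InnerProductSpace ℝ H]
    [Fintype ι] [DecidableEq ι] (α : ι → ℝ) (v : ι → H) :
    ‖∑ i, α i • v i‖ ^ 2 =
      ∑ i, (α i ^ 2 * ‖v i‖ ^ 2 + ∑ j ∈ univ.erase i, α i * α j * ⟪v i, v j⟫) := by
  rw [← real_inner_self_eq_norm_sq, sum_inner]
  refine sum_congr rfl fun i _ => ?_
  rw [inner_sum, ← add_sum_erase _ _ (mem_univ i)]
  simp only [real_inner_smul_left, real_inner_smul_right, real_inner_self_eq_norm_sq]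
  congr 1
  · rw [norm_smul, mul_pow, Real.norm_eq_abs, sq_abs]
  · exact sum_congr rfl fun j _ => by ring

theorem abs_inner_le_of_le_sq_sub_inner_sq_div {H : Type*} [NormedAddCommGroup H]
    [InnerProductSpace ℝ H] {x y : H} {R δ : ℝ} (hx : ‖x‖ ≤ R) (hy : ‖y‖ ≤ R)
    (hxy : δ ^ 2 ≤ ‖x‖ ^ 2 - ⟪x, y⟫ ^ 2 / ‖y‖ ^ 2) :
    |⟪x, y⟫| ≤ R * √(R ^ 2 - δ ^ 2) := by
  have hR : 0 ≤ R := (norm_nonneg y).trans hy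
  rcases eq_or_ne y 0 with rfl | hy0
  · simp only [inner_zero_right, abs_zero]
    positivity
  have hproj : ⟪x, y⟫ ^ 2 / ‖y‖ ^ 2 ≤ R ^ 2 - δ ^ 2 := by
    linarith [pow_le_pow_left₀ (norm_nonneg x) hx 2]
  have hsq : ⟪x, y⟫ ^ 2 ≤ (R * √(R ^ 2 - δ ^ 2)) ^ 2 := by
    rw [mul_pow, Real.sq_sqrt ((div_nonneg (sq_nonneg _) (sq_nonneg _)).trans hproj),
      ← div_mul_cancel₀ (⟪x, y⟫ ^ 2) (pow_ne_zero 2 (norm_ne_zero_iff.mpr hy0)), mul_comm]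
    exact mul_le_mul (pow_le_pow_left₀ (norm_nonneg y) hy 2) hproj (by positivity) (sq_nonneg R)
  exact abs_le_of_sq_le_sq hsq (by positivity)

theorem quasi_isometry_distant_general
    {H : Type*} [NormedAddCommGroup H] [InnerProductSpace ℝ H]
    {m : ℕ} (v : Fin m → H) (r R δ : ℝ)
    (hr : 0 < r)
    (hlow : ∀ i, r ≤ ‖v i‖) (hup : ∀ i, ‖v i‖ ≤ R)
    (hdist : ∀ i j, i ≠ j → δ ^ 2 ≤ ‖v i‖ ^ 2 - ⟪v i, v j⟫ ^ 2 / ‖v j‖ ^ 2)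
    (α : Fin m → ℝ) :
    (r ^ 2 - ((m : ℝ) - 1) * R * Real.sqrt (R ^ 2 - δ ^ 2)) * ∑ j, (α j) ^ 2 ≤
      ‖∑ j, α j • v j‖ ^ 2 ∧
    ‖∑ j, α j • v j‖ ^ 2 ≤
      (R ^ 2 + ((m : ℝ) - 1) * R * Real.sqrt (R ^ 2 - δ ^ 2)) * ∑ j, (α j) ^ 2 := by
  have hoff := abs_sum_sum_erase_mul_mul_le α (fun i j => ⟪v i, v j⟫) fun i j hij =>
    abs_inner_le_of_le_sq_sub_inner_sq_div (hup i) (hup j) (hdist i j hij)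
  have hdiag_low : r ^ 2 * ∑ j, α j ^ 2 ≤ ∑ j, α j ^ 2 * ‖v j‖ ^ 2 := by
    rw [mul_sum]
    exact sum_le_sum fun j _ => by
      rw [mul_comm]; gcongr; exact hlow j
  have hdiag_up : ∑ j, α j ^ 2 * ‖v j‖ ^ 2 ≤ R ^ 2 * ∑ j, α j ^ 2 := by
    rw [mul_sum]
    exact sum_le_sum fun j _ => by
      rw [mul_comm]; gcongr; exact hup j
  rw [Fintype.card_fin] at hoff
  rw [norm_sum_smul_sq, sum_add_distrib]
  constructor <;> linarith [abs_le.mp hoff]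

/-- Quasi-isometry between the dual space ℝ^m and the span of a δ-distant
dictionary. -/
theorem quasi_isometry_distant
    {H : Type*} [NormedAddCommGroup H] [InnerProductSpace ℝ H]
    {m : ℕ} (v : Fin m → H) (r R δ : ℝ)
    (hr : 0 < r) (hδ : 0 ≤ δ)
    (hlow : ∀ i, r ≤ ‖v i‖) (hup : ∀ i, ‖v i‖ ≤ R)
    (hdist : ∀ i j, i ≠ j → δ ^ 2 ≤ ‖v i‖ ^ 2 - ⟪v i, v j⟫ ^ 2 / ‖v j‖ ^ 2)
    (α : Fin m → ℝ) :
    (r ^ 2 - ((m : ℝ) - 1) * R * Real.sqrt (R ^ 2 - δ ^ 2)) * ∑ j, (α j) ^ 2 ≤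
      ‖∑ j, α j • v j‖ ^ 2 ∧
    ‖∑ j, α j • v j‖ ^ 2 ≤
      (R ^ 2 + ((m : ℝ) - 1) * R * Real.sqrt (R ^ 2 - δ ^ 2)) * ∑ j, (α j) ^ 2 :=
  quasi_isometry_distant_general v r R δ hr hlow hup hdist α
end

section
/- Let H be a real inner product space, m ∈ ℕ, and v : Fin m → H a family of vectors with 0 < r ≤ ‖v i‖ ≤ R for all i. Suppose the dictionary is γ-coherent, i.e., for all i ≠ j, |⟪v i, v j⟫| ≤ γ · ‖v i‖ · ‖v j‖ (with γ ≥ 0). Then for every coefficient vector α : Fin m → ℝ, (r² − (m−1)·γ·R²) · ‖α‖² ≤ ‖∑_j α j • v j‖² ≤ (R² + (m−1)·γ·R²) · ‖α‖², where ‖α‖² = ∑_j (α j)². (Quasi-isometry between the dual space ℝ^m and the span of the dictionary, for the coherence measure.) -/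
/-!
Expanding `‖∑ j, α j • v j‖²` as the quadratic form of the Gram matrix separates the diagonal
`∑ i, α i² ‖v i‖²`, which lies between `r² ‖α‖²` and `R² ‖α‖²`, from the off-diagonal part. By
coherence each off-diagonal entry is at most `γ R²` in absolute value, and
`∑_{i ≠ j} |α i α j| = (∑ i, |α i|)² - ‖α‖² ≤ (m - 1) ‖α‖²` by Cauchy–Schwarz, so the off-diagonal
part is at most `(m - 1) γ R² ‖α‖²` in absolute value.
-/

open scoped RealInnerProductSpace

open Finset

theorem Finset.sum_sum_eq_sum_add_sum_offDiag {ι M : Type*} [DecidableEq ι] [AddCommMonoid M]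
    (s : Finset ι) (f : ι → ι → M) :
    ∑ i ∈ s, ∑ j ∈ s, f i j = ∑ i ∈ s, f i i + ∑ p ∈ s.offDiag, f p.1 p.2 := by
  rw [← sum_product' s s f, ← diag_union_offDiag, sum_union (disjoint_diag_offDiag s), sum_diag]

section

variable {ι : Type*} [Fintype ι] [DecidableEq ι]

theorem sum_offDiag_abs_mul_le (α : ι → ℝ) :
    ∑ p ∈ univ.offDiag, |α p.1 * α p.2| ≤ ((Fintype.card ι : ℝ) - 1) * ∑ i, α i ^ 2 := by
  have hsq : (∑ i, |α i|) ^ 2 = ∑ i, α i ^ 2 + ∑ p ∈ univ.offDiag, |α p.1 * α p.2| := by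
    simp only [sq, sum_mul_sum, ← abs_mul, sum_sum_eq_sum_add_sum_offDiag, abs_mul_self]
  have hcs : (∑ i, |α i|) ^ 2 ≤ Fintype.card ι * ∑ i, α i ^ 2 := by
    simpa only [sq_abs, card_univ] using sq_sum_le_card_mul_sum_sq (s := univ) (f := fun i => |α i|)
  linarith

variable {H : Type*} [NormedAddCommGroup H] [InnerProductSpace ℝ H]

theorem norm_sum_smul_sq_eq (v : ι → H) (α : ι → ℝ) :
    ‖∑ i, α i • v i‖ ^ 2 =
      ∑ i, α i ^ 2 * ‖v i‖ ^ 2 + ∑ p ∈ univ.offDiag, α p.1 * α p.2 * ⟪v p.1, v p.2⟫ := by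
  have hgram : ‖∑ i, α i • v i‖ ^ 2 = ∑ i, ∑ j, α i * α j * ⟪v i, v j⟫ := by
    rw [← real_inner_self_eq_norm_sq, sum_inner]
    refine sum_congr rfl fun i _ => ?_
    rw [inner_sum]
    refine sum_congr rfl fun j _ => ?_
    rw [real_inner_smul_left, real_inner_smul_right, mul_assoc]
  simp only [hgram, sum_sum_eq_sum_add_sum_offDiag, real_inner_self_eq_norm_sq, sq]

theorem abs_norm_sum_smul_sq_sub_le (v : ι → H) (α : ι → ℝ) {c : ℝ} (hc : 0 ≤ c)
    (hinner : ∀ i j, i ≠ j → |⟪v i, v j⟫| ≤ c) :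
    |‖∑ i, α i • v i‖ ^ 2 - ∑ i, α i ^ 2 * ‖v i‖ ^ 2| ≤
      ((Fintype.card ι : ℝ) - 1) * c * ∑ i, α i ^ 2 := by
  rw [norm_sum_smul_sq_eq, add_sub_cancel_left]
  calc |∑ p ∈ univ.offDiag, α p.1 * α p.2 * ⟪v p.1, v p.2⟫|
      ≤ ∑ p ∈ univ.offDiag, |α p.1 * α p.2| * c := by
        refine (abs_sum_le_sum_abs _ _).trans (sum_le_sum fun p hp => ?_)
        rw [abs_mul]
        exact mul_le_mul_of_nonneg_left (hinner _ _ (mem_offDiag.mp hp).2.2) (abs_nonneg _)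
    _ ≤ ((Fintype.card ι : ℝ) - 1) * c * ∑ i, α i ^ 2 := by
        rw [← sum_mul, mul_right_comm]
        exact mul_le_mul_of_nonneg_right (sum_offDiag_abs_mul_le α) hc

end

/-- Quasi-isometry between the dual space ℝ^m and the span of a γ-coherent
dictionary. -/
theorem quasi_isometry_coherent
    {H : Type*} [NormedAddCommGroup H] [InnerProductSpace ℝ H]
    {m : ℕ} (v : Fin m → H) (r R γ : ℝ)
    (hr : 0 < r) (hγ : 0 ≤ γ)
    (hlow : ∀ i, r ≤ ‖v i‖) (hup : ∀ i, ‖v i‖ ≤ R)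
    (hcoh : ∀ i j, i ≠ j → |⟪v i, v j⟫| ≤ γ * ‖v i‖ * ‖v j‖)
    (α : Fin m → ℝ) :
    (r ^ 2 - ((m : ℝ) - 1) * γ * R ^ 2) * ∑ j, (α j) ^ 2 ≤
      ‖∑ j, α j • v j‖ ^ 2 ∧
    ‖∑ j, α j • v j‖ ^ 2 ≤
      (R ^ 2 + ((m : ℝ) - 1) * γ * R ^ 2) * ∑ j, (α j) ^ 2 := by
  have hinner : ∀ i j, i ≠ j → |⟪v i, v j⟫| ≤ γ * R ^ 2 := fun i j hij =>
    (hcoh i j hij).trans <| by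
      rw [mul_assoc, sq]
      exact mul_le_mul_of_nonneg_left
        (mul_le_mul (hup i) (hup j) (norm_nonneg _) ((norm_nonneg _).trans (hup i))) hγ
  have hoff := abs_norm_sum_smul_sq_sub_le v α (by positivity) hinner
  rw [Fintype.card_fin, ← mul_assoc] at hoff
  have hdiag_low : r ^ 2 * ∑ j, α j ^ 2 ≤ ∑ j, α j ^ 2 * ‖v j‖ ^ 2 := by
    rw [mul_sum]
    exact sum_le_sum fun j _ => by
      rw [mul_comm]; gcongr; exact hlow j
  have hdiag_up : ∑ j, α j ^ 2 * ‖v j‖ ^ 2 ≤ R ^ 2 * ∑ j, α j ^ 2 := by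
    rw [mul_sum]
    exact sum_le_sum fun j _ => by
      rw [mul_comm]; gcongr; exact hup j
  obtain ⟨hoff_low, hoff_up⟩ := abs_le.mp hoff
  constructor <;> linarith
end

section
/- Let H be a real inner product space, m ∈ ℕ, and v : Fin m → H a family of unit-norm vectors (‖v i‖ = 1 for all i). Suppose the dictionary is γ-coherent, i.e., for all i ≠ j, |⟪v i, v j⟫| ≤ γ (with γ ≥ 0). Then for all coefficient vectors α, β : Fin m → ℝ, |⟪∑_j α j • v j, ∑_j β j • v j⟫ − ∑_j (α j)(β j)| ≤ (m−1)·γ·‖α‖·‖β‖, where ‖·‖ denotes the Euclidean norm on ℝ^m. (Quasi-isometry with respect to inner products, for the coherence measure.) -/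
open scoped RealInnerProductSpace BigOperators

/-!
Expanding both sums, the diagonal terms reproduce `∑ j, α j * β j` because the atoms have unit
norm, so the defect is the off-diagonal sum `∑_{i ≠ j} α i * β j * ⟪v i, v j⟫`. Coherence bounds it
by `γ * ∑_{i ≠ j} |α i| * |β j|`, and Cauchy–Schwarz over the `m * (m - 1)` off-diagonal pairs,
each index occurring `m - 1` times in either coordinate, gives `(m - 1) * ‖α‖ * ‖β‖`.
-/

open Finset

namespace Finset

variable {ι : Type*} [DecidableEq ι] (s : Finset ι)

theorem sum_product_eq_sum_diag_add_sum_offDiag {M : Type*} [AddCommMonoid M]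
    (f : ι × ι → M) :
    ∑ p ∈ s ×ˢ s, f p = ∑ i ∈ s, f (i, i) + ∑ p ∈ s.offDiag, f p := by
  rw [← diag_union_offDiag, sum_union (disjoint_diag_offDiag s), sum_diag]

theorem sum_offDiag_comp_fst {R : Type*} [CommRing R] (f : ι → R) :
    ∑ p ∈ s.offDiag, f p.1 = ((#s : R) - 1) * ∑ i ∈ s, f i := by
  have h := s.sum_product_eq_sum_diag_add_sum_offDiag fun p ↦ f p.1
  rw [sum_product] at h
  simp only [sum_const, nsmul_eq_mul, ← mul_sum] at h
  linear_combination -h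

theorem sum_offDiag_comp_snd {R : Type*} [CommRing R] (f : ι → R) :
    ∑ p ∈ s.offDiag, f p.2 = ((#s : R) - 1) * ∑ i ∈ s, f i := by
  have h := s.sum_product_eq_sum_diag_add_sum_offDiag fun p ↦ f p.2
  rw [sum_product_right] at h
  simp only [sum_const, nsmul_eq_mul, ← mul_sum] at h
  linear_combination -h

theorem sum_offDiag_mul_le_sqrt_mul_sqrt (a b : ι → ℝ) :
    ∑ p ∈ s.offDiag, a p.1 * b p.2 ≤
      ((#s : ℝ) - 1) * √(∑ i ∈ s, a i ^ 2) * √(∑ i ∈ s, b i ^ 2) := by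
  rcases s.eq_empty_or_nonempty with rfl | hs
  · simp
  have hcard : (0 : ℝ) ≤ #s - 1 := by
    rw [sub_nonneg, Nat.one_le_cast]
    exact hs.card_pos
  calc ∑ p ∈ s.offDiag, a p.1 * b p.2
      ≤ √(∑ p ∈ s.offDiag, a p.1 ^ 2) * √(∑ p ∈ s.offDiag, b p.2 ^ 2) :=
        Real.sum_mul_le_sqrt_mul_sqrt _ _ _
    _ = √((#s : ℝ) - 1) * √((#s : ℝ) - 1) * √(∑ i ∈ s, a i ^ 2) * √(∑ i ∈ s, b i ^ 2) := by
        rw [sum_offDiag_comp_fst s fun i ↦ a i ^ 2, sum_offDiag_comp_snd s fun i ↦ b i ^ 2,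
          Real.sqrt_mul hcard,
          Real.sqrt_mul hcard]
        ring
    _ = ((#s : ℝ) - 1) * √(∑ i ∈ s, a i ^ 2) * √(∑ i ∈ s, b i ^ 2) := by
        rw [Real.mul_self_sqrt hcard]

end Finset

section InnerProduct

variable {ι H : Type*} [NormedAddCommGroup H] [InnerProductSpace ℝ H]

theorem inner_sum_smul_sum_smul (s t : Finset ι) (v w : ι → H) (α β : ι → ℝ) :
    ⟪∑ i ∈ s, α i • v i, ∑ j ∈ t, β j • w j⟫ =
      ∑ p ∈ s ×ˢ t, α p.1 * β p.2 * ⟪v p.1, w p.2⟫ := by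
  rw [sum_product, sum_inner]
  simp only [inner_sum, real_inner_smul_left, real_inner_smul_right, mul_assoc, mul_left_comm]

theorem inner_sum_smul_sum_smul_sub_sum_mul [DecidableEq ι] (s : Finset ι) (v : ι → H)
    (hv : ∀ i ∈ s, ‖v i‖ = 1) (α β : ι → ℝ) :
    ⟪∑ i ∈ s, α i • v i, ∑ j ∈ s, β j • v j⟫ - ∑ i ∈ s, α i * β i =
      ∑ p ∈ s.offDiag, α p.1 * β p.2 * ⟪v p.1, v p.2⟫ := by
  have hdiag : ∑ i ∈ s, α i * β i * ⟪v i, v i⟫ = ∑ i ∈ s, α i * β i :=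
    sum_congr rfl fun i hi ↦ by rw [real_inner_self_eq_norm_sq, hv i hi, one_pow, mul_one]
  rw [inner_sum_smul_sum_smul, sum_product_eq_sum_diag_add_sum_offDiag, hdiag, add_sub_cancel_left]

end InnerProduct

/-- Quasi-isometry with respect to inner products for a γ-coherent dictionary
of unit-norm atoms. -/
theorem inner_quasi_isometry_coherent
    {H : Type*} [NormedAddCommGroup H] [InnerProductSpace ℝ H]
    {m : ℕ} (v : Fin m → H) (γ : ℝ) (hγ : 0 ≤ γ)
    (hunit : ∀ i, ‖v i‖ = 1)
    (hcoh : ∀ i j, i ≠ j → |⟪v i, v j⟫| ≤ γ)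
    (α β : Fin m → ℝ) :
    |⟪∑ j, α j • v j, ∑ j, β j • v j⟫ - ∑ j, α j * β j| ≤
      ((m : ℝ) - 1) * γ * Real.sqrt (∑ j, (α j) ^ 2) *
        Real.sqrt (∑ j, (β j) ^ 2) := by
  have hterm : ∀ p ∈ (univ : Finset (Fin m)).offDiag,
      |α p.1 * β p.2 * ⟪v p.1, v p.2⟫| ≤ γ * (|α p.1| * |β p.2|) := by
    intro p hp
    rw [abs_mul, abs_mul, mul_comm γ]
    exact mul_le_mul_of_nonneg_left (hcoh _ _ (mem_offDiag.1 hp).2.2) (by positivity)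
  calc |⟪∑ j, α j • v j, ∑ j, β j • v j⟫ - ∑ j, α j * β j|
      = |∑ p ∈ univ.offDiag, α p.1 * β p.2 * ⟪v p.1, v p.2⟫| := by
        rw [inner_sum_smul_sum_smul_sub_sum_mul univ v fun i _ ↦ hunit i]
    _ ≤ γ * ∑ p ∈ univ.offDiag, |α p.1| * |β p.2| := by
        rw [mul_sum]
        exact (abs_sum_le_sum_abs _ _).trans (sum_le_sum hterm)
    _ ≤ γ * (((m : ℝ) - 1) * √(∑ j, |α j| ^ 2) * √(∑ j, |β j| ^ 2)) := by
        gcongr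
        simpa using univ.sum_offDiag_mul_le_sqrt_mul_sqrt (fun j ↦ |α j|) fun j ↦ |β j|
    _ = ((m : ℝ) - 1) * γ * √(∑ j, α j ^ 2) * √(∑ j, β j ^ 2) := by
        simp only [sq_abs]
        ring
end

section
/- Let H be a real inner product space, m ∈ ℕ, and v : Fin m → H a family of unit-norm vectors (‖v i‖ = 1 for all i). Suppose the dictionary has Babel measure at most γ, i.e., for every index i, ∑_{j ≠ i} |⟪v i, v j⟫| ≤ γ (with γ ≥ 0). Then for all coefficient vectors α, β : Fin m → ℝ, |⟪∑_j α j • v j, ∑_j β j • v j⟫ − ∑_j (α j)(β j)| ≤ γ·‖α‖·‖β‖, where ‖·‖ denotes the Euclidean norm on ℝ^m. (Quasi-isometry with respect to inner products, for the Babel measure.) -/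
/-!
Writing `G` for the Gram matrix of the atoms, the defect
`⟪∑ α j • v j, ∑ β j • v j⟫ - ∑ α j * β j` is the bilinear form `α ⬝ᵥ (G - 1) *ᵥ β`. Unit norms
make the diagonal of `G - 1` vanish, so the Babel condition says that every row of `G - 1`, and by
symmetry every column, has absolute sum at most `γ`. The Schur test then bounds the form by
`γ ‖α‖ ‖β‖`.
-/

open scoped RealInnerProductSpace
open Finset Matrix

/-- **Schur test**: Cauchy–Schwarz with weights `|A i j|` on the pairs `(i, j)`. -/
theorem Matrix.sq_dotProduct_mulVec_le_of_abs_sum_le {ι κ : Type*} [Fintype ι] [Fintype κ]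
    (A : Matrix ι κ ℝ) {r c : ℝ} (hrow : ∀ i, ∑ j, |A i j| ≤ r) (hcol : ∀ j, ∑ i, |A i j| ≤ c)
    (x : ι → ℝ) (y : κ → ℝ) :
    (x ⬝ᵥ A *ᵥ y) ^ 2 ≤ r * c * (∑ i, x i ^ 2) * ∑ j, y j ^ 2 := by
  have hform : x ⬝ᵥ A *ᵥ y = ∑ p : ι × κ, x p.1 * A p.1 p.2 * y p.2 := by
    simp only [dotProduct, mulVec, mul_sum, Fintype.sum_prod_type, mul_assoc]
  have hx : ∑ p : ι × κ, |A p.1 p.2| * x p.1 ^ 2 ≤ r * ∑ i, x i ^ 2 := by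
    rw [Fintype.sum_prod_type, mul_sum]
    gcongr with i
    dsimp only
    rw [← sum_mul]
    exact mul_le_mul_of_nonneg_right (hrow i) (sq_nonneg _)
  have hy : ∑ p : ι × κ, |A p.1 p.2| * y p.2 ^ 2 ≤ c * ∑ j, y j ^ 2 := by
    rw [Fintype.sum_prod_type_right, mul_sum]
    gcongr with j
    dsimp only
    rw [← sum_mul]
    exact mul_le_mul_of_nonneg_right (hcol j) (sq_nonneg _)
  calc (x ⬝ᵥ A *ᵥ y) ^ 2
      ≤ (∑ p : ι × κ, |A p.1 p.2| * x p.1 ^ 2) * ∑ p : ι × κ, |A p.1 p.2| * y p.2 ^ 2 := by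
        rw [hform]
        refine sum_sq_le_sum_mul_sum_of_sq_le_mul _ (fun _ _ ↦ by positivity)
          (fun _ _ ↦ by positivity) fun p _ ↦ le_of_eq ?_
        linear_combination (-(x p.1 ^ 2 * y p.2 ^ 2)) * sq_abs (A p.1 p.2)
    _ ≤ (r * ∑ i, x i ^ 2) * (c * ∑ j, y j ^ 2) :=
        mul_le_mul hx hy (sum_nonneg fun _ _ ↦ by positivity)
          ((sum_nonneg fun _ _ ↦ by positivity).trans hx)
    _ = r * c * (∑ i, x i ^ 2) * ∑ j, y j ^ 2 := by ring

section Gram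

variable {ι E : Type*} [NormedAddCommGroup E] [InnerProductSpace ℝ E]

theorem Matrix.isSymm_gram_real (v : ι → E) : (gram ℝ v).IsSymm :=
  IsSymm.ext_iff.2 fun _ _ ↦ real_inner_comm _ _

theorem Matrix.sum_abs_gram_sub_one [Fintype ι] [DecidableEq ι] {v : ι → E}
    (hv : ∀ i, ‖v i‖ = 1) (i : ι) :
    ∑ j, |(gram ℝ v - 1) i j| = ∑ j ∈ univ.erase i, |⟪v i, v j⟫| := by
  rw [← add_sum_erase _ _ (mem_univ i)]
  refine (add_eq_right.2 ?_).trans (sum_congr rfl fun j hj ↦ ?_)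
  · simp [hv i]
  · simp [one_apply_ne (ne_of_mem_erase hj).symm]

end Gram

/-- Quasi-isometry with respect to inner products for a γ-Babel dictionary
of unit-norm atoms. -/
theorem inner_quasi_isometry_babel
    {H : Type*} [NormedAddCommGroup H] [InnerProductSpace ℝ H]
    {m : ℕ} (v : Fin m → H) (γ : ℝ) (hγ : 0 ≤ γ)
    (hunit : ∀ i, ‖v i‖ = 1)
    (hbabel : ∀ i, ∑ j ∈ Finset.univ.erase i, |⟪v i, v j⟫| ≤ γ)
    (α β : Fin m → ℝ) :
    |⟪∑ j, α j • v j, ∑ j, β j • v j⟫ - ∑ j, α j * β j| ≤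
      γ * Real.sqrt (∑ j, (α j) ^ 2) * Real.sqrt (∑ j, (β j) ^ 2) := by
  set A := gram ℝ v - 1
  have hrow : ∀ i, ∑ j, |A i j| ≤ γ := fun i ↦ (sum_abs_gram_sub_one hunit i).trans_le (hbabel i)
  have hsymm : A.IsSymm := (isSymm_gram_real v).sub isSymm_one
  have hcol : ∀ j, ∑ i, |A i j| ≤ γ := fun j ↦
    (sum_congr rfl fun i _ ↦ by rw [hsymm.apply]).trans_le (hrow j)
  have hdefect : ⟪∑ j, α j • v j, ∑ j, β j • v j⟫ - ∑ j, α j * β j = α ⬝ᵥ A *ᵥ β := by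
    rw [sub_mulVec, dotProduct_sub, one_mulVec, ← star_dotProduct_gram_mulVec v α β, star_trivial]
    rfl
  have hsq := sq_dotProduct_mulVec_le_of_abs_sum_le A hrow hcol α β
  rw [hdefect]
  refine (Real.abs_le_sqrt hsq).trans_eq ?_
  rw [Real.sqrt_mul (by positivity), Real.sqrt_mul (by positivity), Real.sqrt_mul_self hγ]
end

section
/- Let H be a real inner product space, m ∈ ℕ, and v : Fin m → H a family of unit-norm vectors (‖v i‖ = 1 for all i). Suppose the dictionary is δ-distant, i.e., for all i ≠ j, ‖v i‖² − ⟪v i, v j⟫² / ‖v j‖² ≥ δ² (equivalently, for unit-norm atoms, 1 − ⟪v i, v j⟫² ≥ δ²), with 0 ≤ δ ≤ 1. Then for all coefficient vectors α, β : Fin m → ℝ, |⟪∑_j α j • v j, ∑_j β j • v j⟫ − ∑_j (α j)(β j)| ≤ (m−1)·√(1 − δ²)·‖α‖·‖β‖, where ‖·‖ denotes the Euclidean norm on ℝ^m. (Quasi-isometry with respect to inner products, for the distance measure.) -/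
/-!
Expanding the inner product and using ‖v i‖ = 1, the error is the off-diagonal part
`∑_{i ≠ j} α i β j ⟪v i, v j⟫` of the Gram form, and δ-distance bounds each off-diagonal
entry by `√(1 - δ²)`. The remaining sum `∑_{i ≠ j} |α i| |β j|` is split along the
`m - 1` nonzero cyclic shifts `j = i + k` of `Fin m`, each of which is at most `‖α‖ ‖β‖`
by Cauchy–Schwarz.
-/

open scoped RealInnerProductSpace BigOperators

open Finset

section OffDiagonal

variable {G : Type*} [AddGroup G] [Fintype G]

lemma sum_abs_mul_abs_add_le (a b : G → ℝ) (k : G) :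
    ∑ i, |a i| * |b (i + k)| ≤ √(∑ i, a i ^ 2) * √(∑ i, b i ^ 2) := by
  have hb : ∑ i, b (i + k) ^ 2 = ∑ i, b i ^ 2 :=
    Equiv.sum_comp (Equiv.addRight k) (b · ^ 2)
  simpa only [sq_abs, hb] using
    Real.sum_mul_le_sqrt_mul_sqrt univ (fun i => |a i|) (fun i => |b (i + k)|)

lemma sum_erase_eq_sum_erase_zero_add [DecidableEq G] {M : Type*} [AddCommMonoid M]
    (f : G → M) (i : G) :
    ∑ j ∈ univ.erase i, f j = ∑ k ∈ univ.erase 0, f (i + k) :=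
  sum_nbij' (fun j => -i + j) (fun k => i + k)
    (by simp [neg_add_eq_zero, eq_comm]) (by simp) (by simp) (by simp) (by simp)

lemma sum_offDiag_abs_mul_abs_le [DecidableEq G] (a b : G → ℝ) :
    ∑ i, ∑ j ∈ univ.erase i, |a i| * |b j| ≤
      ((Fintype.card G : ℝ) - 1) * √(∑ i, a i ^ 2) * √(∑ i, b i ^ 2) := by
  simp_rw [sum_erase_eq_sum_erase_zero_add (fun j => |a _| * |b j|)]
  rw [sum_comm]
  calc ∑ k ∈ univ.erase 0, ∑ i, |a i| * |b (i + k)|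
      ≤ ∑ _k ∈ univ.erase (0 : G), √(∑ i, a i ^ 2) * √(∑ i, b i ^ 2) :=
        sum_le_sum fun k _ => sum_abs_mul_abs_add_le a b k
    _ = ((Fintype.card G : ℝ) - 1) * √(∑ i, a i ^ 2) * √(∑ i, b i ^ 2) := by
        rw [sum_const, card_erase_of_mem (mem_univ _), card_univ, nsmul_eq_mul,
          Nat.cast_pred Fintype.card_pos]
        ring

end OffDiagonal

lemma Fin.sum_offDiag_abs_mul_abs_le {m : ℕ} (a b : Fin m → ℝ) :
    ∑ i, ∑ j ∈ univ.erase i, |a i| * |b j| ≤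
      ((m : ℝ) - 1) * √(∑ i, a i ^ 2) * √(∑ i, b i ^ 2) := by
  cases m with
  | zero => simp
  | succ n => simpa using _root_.sum_offDiag_abs_mul_abs_le a b

lemma abs_sum_offDiag_mul_le {ι : Type*} [Fintype ι] [DecidableEq ι] (a b : ι → ℝ)
    (c : ι → ι → ℝ) {μ : ℝ} (hc : ∀ i j, i ≠ j → |c i j| ≤ μ) :
    |∑ i, ∑ j ∈ univ.erase i, a i * b j * c i j| ≤
      μ * ∑ i, ∑ j ∈ univ.erase i, |a i| * |b j| := by
  rw [mul_sum]
  refine (abs_sum_le_sum_abs _ _).trans (sum_le_sum fun i _ => ?_)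
  rw [mul_sum]
  refine (abs_sum_le_sum_abs _ _).trans (sum_le_sum fun j hj => ?_)
  rw [abs_mul, abs_mul, mul_comm μ]
  exact mul_le_mul_of_nonneg_left (hc i j (ne_of_mem_erase hj).symm) (by positivity)

lemma inner_sum_smul_sub_sum_mul_eq_sum_offDiag {H : Type*} [NormedAddCommGroup H]
    [InnerProductSpace ℝ H] {ι : Type*} [Fintype ι] [DecidableEq ι] {v : ι → H}
    (hunit : ∀ i, ‖v i‖ = 1) (α β : ι → ℝ) :
    ⟪∑ j, α j • v j, ∑ j, β j • v j⟫ - ∑ j, α j * β j =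
      ∑ i, ∑ j ∈ univ.erase i, α i * β j * ⟪v i, v j⟫ := by
  simp_rw [sum_inner, inner_sum, real_inner_smul_left, real_inner_smul_right,
    ← sum_sub_distrib]
  refine sum_congr rfl fun i _ => ?_
  rw [← add_sum_erase _ _ (mem_univ i), real_inner_self_eq_norm_sq, hunit i]
  simp only [mul_comm (α i), mul_assoc]
  ring

theorem inner_quasi_isometry_distant_general
    {H : Type*} [NormedAddCommGroup H] [InnerProductSpace ℝ H]
    {m : ℕ} (v : Fin m → H) (δ : ℝ)
    (hunit : ∀ i, ‖v i‖ = 1)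
    (hdist : ∀ i j, i ≠ j → δ ^ 2 ≤ ‖v i‖ ^ 2 - ⟪v i, v j⟫ ^ 2 / ‖v j‖ ^ 2)
    (α β : Fin m → ℝ) :
    |⟪∑ j, α j • v j, ∑ j, β j • v j⟫ - ∑ j, α j * β j| ≤
      ((m : ℝ) - 1) * Real.sqrt (1 - δ ^ 2) * Real.sqrt (∑ j, (α j) ^ 2) *
        Real.sqrt (∑ j, (β j) ^ 2) := by
  have hcoherence : ∀ i j, i ≠ j → |⟪v i, v j⟫| ≤ √(1 - δ ^ 2) := fun i j hij => by
    have h := hdist i j hij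
    rw [hunit i, hunit j] at h
    exact Real.abs_le_sqrt (by linarith)
  rw [inner_sum_smul_sub_sum_mul_eq_sum_offDiag hunit]
  calc _ ≤ √(1 - δ ^ 2) * ∑ i, ∑ j ∈ univ.erase i, |α i| * |β j| :=
        abs_sum_offDiag_mul_le α β _ hcoherence
    _ ≤ √(1 - δ ^ 2) * (((m : ℝ) - 1) * √(∑ j, α j ^ 2) * √(∑ j, β j ^ 2)) := by
        gcongr
        exact Fin.sum_offDiag_abs_mul_abs_le α β
    _ = _ := by ring

/-- Quasi-isometry with respect to inner products for a δ-distant dictionary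
of unit-norm atoms. -/
theorem inner_quasi_isometry_distant
    {H : Type*} [NormedAddCommGroup H] [InnerProductSpace ℝ H]
    {m : ℕ} (v : Fin m → H) (δ : ℝ) (hδ0 : 0 ≤ δ) (hδ1 : δ ≤ 1)
    (hunit : ∀ i, ‖v i‖ = 1)
    (hdist : ∀ i j, i ≠ j → δ ^ 2 ≤ ‖v i‖ ^ 2 - ⟪v i, v j⟫ ^ 2 / ‖v j‖ ^ 2)
    (α β : Fin m → ℝ) :
    |⟪∑ j, α j • v j, ∑ j, β j • v j⟫ - ∑ j, α j * β j| ≤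
      ((m : ℝ) - 1) * Real.sqrt (1 - δ ^ 2) * Real.sqrt (∑ j, (α j) ^ 2) *
        Real.sqrt (∑ j, (β j) ^ 2) :=
  inner_quasi_isometry_distant_general v δ hunit hdist α β
end
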